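/- arXiv:1611.08038 — 4 statements merged into one kernel-verified Lean document; each statement's English description precedes it below -/
import Mathlib

section
/- Let Q be an m×n real matrix with a k-dimensional nullspace. Let R be an n×k matrix whose projection onto the nullspace of Q is full rank, i.e., if N is an n×k matrix whose columns form a basis for Nul(Q), then Rᵀ N is invertible. Let V be an arbitrary m×k matrix. Then the range of Q + V Rᵀ contains both the range of Q and the range of V. -/
/-! Perturbing `x₀` along `Nul Q` does not change `Q x₀`, while it moves `Rᵀ x₀` by `Rᵀ N w`;
since `Rᵀ N` is invertible, `w` can be chosen so that the `V Rᵀ` part produces exactly `V α₀`. -/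

open Matrix

namespace Matrix

variable {S : Type*} [CommRing S] {m n k : Type*} [Fintype n] [Fintype k]

theorem mul_eq_zero_of_forall_mulVec_mulVec_eq_zero {Q : Matrix m n S} {N : Matrix n k S}
    (h : ∀ w, Q *ᵥ (N *ᵥ w) = 0) : Q * N = 0 :=
  ext_iff_mulVec.mpr fun w => by rw [← mulVec_mulVec, h, zero_mulVec]

theorem add_mul_transpose_mulVec_add_mulVec {Q : Matrix m n S} {N R : Matrix n k S}
    (V : Matrix m k S) (hQN : Q * N = 0) (x₀ : n → S) (w : k → S) :
    (Q + V * Rᵀ) *ᵥ (x₀ + N *ᵥ w) = Q *ᵥ x₀ + V *ᵥ (Rᵀ *ᵥ x₀ + (Rᵀ * N) *ᵥ w) := by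
  rw [add_mulVec, mulVec_add, mulVec_mulVec, hQN, zero_mulVec, add_zero, ← mulVec_mulVec,
    mulVec_add, mulVec_mulVec]

theorem exists_add_mul_transpose_mulVec_eq [DecidableEq k] {Q : Matrix m n S} {N R : Matrix n k S}
    (V : Matrix m k S) (hQN : Q * N = 0) (hR : IsUnit (Rᵀ * N)) (x₀ : n → S) (α₀ : k → S) :
    ∃ x, (Q + V * Rᵀ) *ᵥ x = Q *ᵥ x₀ + V *ᵥ α₀ := by
  obtain ⟨C, hC⟩ := hR.exists_right_inv
  refine ⟨x₀ + N *ᵥ (C *ᵥ (α₀ - Rᵀ *ᵥ x₀)), ?_⟩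
  rw [add_mul_transpose_mulVec_add_mulVec V hQN, mulVec_mulVec, hC, one_mulVec,
    add_sub_cancel]

end Matrix

theorem stmt0_general (m n k : ℕ)
    (Q : Matrix (Fin m) (Fin n) ℝ) (N : Matrix (Fin n) (Fin k) ℝ)
    (R : Matrix (Fin n) (Fin k) ℝ) (V : Matrix (Fin m) (Fin k) ℝ)
    (hNspan : ∀ x : Fin n → ℝ, Q.mulVec x = 0 ↔ ∃ α : Fin k → ℝ, x = N.mulVec α)
    (hR : IsUnit (Rᵀ * N)) :
    ∀ (x₀ : Fin n → ℝ) (α₀ : Fin k → ℝ),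
      ∃ x : Fin n → ℝ, (Q + V * Rᵀ).mulVec x = Q.mulVec x₀ + V.mulVec α₀ :=
  have hQN : Q * N = 0 :=
    mul_eq_zero_of_forall_mulVec_mulVec_eq_zero fun w => (hNspan _).mpr ⟨w, rfl⟩
  exists_add_mul_transpose_mulVec_eq V hQN hR

/-- **Range-enlargement lemma.**
Let `Q` be an `m×n` real matrix with a `k`-dimensional nullspace, whose nullspace
has basis given by the columns of the `n×k` matrix `N` (linear independence plus
the characterization that `Q x = 0` iff `x` is a linear combination of columns of `N`).
Let `R` be an `n×k` matrix with full-rank projection onto `Nul Q`, i.e. `Rᵀ N` is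
invertible. Let `V` be an arbitrary `m×k` matrix. Then the range of `Q + V Rᵀ`
contains both the range of `Q` and the range of `V`: every vector of the form
`Q x₀ + V α₀` is attained. -/
theorem stmt0 (m n k : ℕ)
    (Q : Matrix (Fin m) (Fin n) ℝ) (N : Matrix (Fin n) (Fin k) ℝ)
    (R : Matrix (Fin n) (Fin k) ℝ) (V : Matrix (Fin m) (Fin k) ℝ)
    (hNindep : LinearIndependent ℝ (fun j : Fin k => fun i : Fin n => N i j))
    (hNspan : ∀ x : Fin n → ℝ, Q.mulVec x = 0 ↔ ∃ α : Fin k → ℝ, x = N.mulVec α)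
    (hR : IsUnit (Rᵀ * N)) :
    ∀ (x₀ : Fin n → ℝ) (α₀ : Fin k → ℝ),
      ∃ x : Fin n → ℝ, (Q + V * Rᵀ).mulVec x = Q.mulVec x₀ + V.mulVec α₀ :=
  stmt0_general m n k Q N R V hNspan hR
end

section
/- Under the hypotheses of the range-enlargement lemma, an explicit solution exists: for any x₀ ∈ ℝⁿ and α₀ ∈ ℝᵏ, the vector x = x₀ + N (Rᵀ N)⁻¹ (α₀ − Rᵀ x₀) satisfies (Q + V Rᵀ) x = Q x₀ + V α₀. -/
open Matrix

namespace Matrix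

variable {𝕜 : Type*} [CommRing 𝕜] {l m n : Type*} [Fintype m] [Fintype n] [DecidableEq n]

theorem mulVec_mulVec_nonsing_inv_mul {A : Matrix n m 𝕜} {B : Matrix m n 𝕜}
    (h : IsUnit (A * B)) (y : n → 𝕜) : A *ᵥ (B *ᵥ ((A * B)⁻¹ *ᵥ y)) = y := by
  rw [mulVec_mulVec, mulVec_mulVec,
    mul_nonsing_inv _ ((isUnit_iff_isUnit_det _).mp h), one_mulVec]

/-- The correction term lies in the kernel of `Q` and shifts `Rᵀ x₀` to `α₀`. -/
theorem add_mul_transpose_mulVec_correction {Q : Matrix l m 𝕜} {N R : Matrix m n 𝕜}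
    (V : Matrix l n 𝕜) (hQN : Q * N = 0) (hR : IsUnit (Rᵀ * N)) (x₀ : m → 𝕜) (α₀ : n → 𝕜) :
    (Q + V * Rᵀ) *ᵥ (x₀ + N *ᵥ ((Rᵀ * N)⁻¹ *ᵥ (α₀ - Rᵀ *ᵥ x₀))) = Q *ᵥ x₀ + V *ᵥ α₀ := by
  have hQN_mulVec (v : n → 𝕜) : Q *ᵥ (N *ᵥ v) = 0 := by rw [mulVec_mulVec, hQN, zero_mulVec]
  rw [add_mulVec, ← mulVec_mulVec, mulVec_add, mulVec_add, mulVec_add, hQN_mulVec,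
    mulVec_mulVec_nonsing_inv_mul hR, ← mulVec_add, add_zero, add_sub_cancel]

end Matrix

theorem stmt1_general (m n k : ℕ)
    (Q : Matrix (Fin m) (Fin n) ℝ) (N : Matrix (Fin n) (Fin k) ℝ)
    (R : Matrix (Fin n) (Fin k) ℝ) (V : Matrix (Fin m) (Fin k) ℝ)
    (hNspan : ∀ x : Fin n → ℝ, Q.mulVec x = 0 ↔ ∃ α : Fin k → ℝ, x = N.mulVec α)
    (hR : IsUnit (Rᵀ * N))
    (x₀ : Fin n → ℝ) (α₀ : Fin k → ℝ) :
    (Q + V * Rᵀ).mulVec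
        (x₀ + N.mulVec ((Rᵀ * N)⁻¹.mulVec (α₀ - Rᵀ.mulVec x₀)))
      = Q.mulVec x₀ + V.mulVec α₀ := by
  have hQN : Q * N = 0 := mulVec_injective <| funext fun α => by
    rw [← mulVec_mulVec, zero_mulVec]
    exact (hNspan _).2 ⟨α, rfl⟩
  exact add_mul_transpose_mulVec_correction V hQN hR x₀ α₀

/-- **Explicit solution in the range-enlargement lemma.**
Under the hypotheses of the range-enlargement lemma (`Q` an `m×n` real matrix whose
nullspace is `k`-dimensional with basis the columns of `N`, `R` an `n×k` matrix with
`Rᵀ N` invertible, `V` an arbitrary `m×k` matrix), for any `x₀ ∈ ℝⁿ` and `α₀ ∈ ℝᵏ`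
the explicit vector `x = x₀ + N (Rᵀ N)⁻¹ (α₀ − Rᵀ x₀)` satisfies
`(Q + V Rᵀ) x = Q x₀ + V α₀`. -/
theorem stmt1 (m n k : ℕ)
    (Q : Matrix (Fin m) (Fin n) ℝ) (N : Matrix (Fin n) (Fin k) ℝ)
    (R : Matrix (Fin n) (Fin k) ℝ) (V : Matrix (Fin m) (Fin k) ℝ)
    (hNindep : LinearIndependent ℝ (fun j : Fin k => fun i : Fin n => N i j))
    (hNspan : ∀ x : Fin n → ℝ, Q.mulVec x = 0 ↔ ∃ α : Fin k → ℝ, x = N.mulVec α)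
    (hR : IsUnit (Rᵀ * N))
    (x₀ : Fin n → ℝ) (α₀ : Fin k → ℝ) :
    (Q + V * Rᵀ).mulVec
        (x₀ + N.mulVec ((Rᵀ * N)⁻¹.mulVec (α₀ - Rᵀ.mulVec x₀)))
      = Q.mulVec x₀ + V.mulVec α₀ :=
  stmt1_general m n k Q N R V hNspan hR x₀ α₀
end

section
/- Let Q be an m×n real matrix with m ≥ n whose nullspace is k-dimensional with basis the columns of N (n×k), let R be n×k with Rᵀ N invertible, let W be an m×k matrix whose columns form a basis of a k-dimensional subspace of Nul(Qᵀ), and let V be an m×k matrix with Wᵀ V invertible. Then the matrix Q + V Rᵀ has trivial nullspace. -/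
/-!
Multiplying `(Q + V Rᵀ) x = 0` by `Wᵀ` kills `Q`, since the columns of `W` lie in `Nul Qᵀ`; as
`Wᵀ V` is invertible this forces `Rᵀ x = 0`, hence `Q x = 0`. So `x = N α`, and then
`(Rᵀ N) α = 0` with `Rᵀ N` invertible gives `α = 0`.
-/

open Matrix

namespace Matrix

variable {m n k 𝕜 : Type*} [Fintype m] [Fintype n] [Fintype k] [DecidableEq k] [CommSemiring 𝕜]

theorem transpose_mulVec_eq_zero_of_add_mul_transpose_mulVec_eq_zero
    {Q : Matrix m n 𝕜} {R : Matrix n k 𝕜} {W V : Matrix m k 𝕜}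
    (hWker : Qᵀ * W = 0) (hWV : IsUnit (Wᵀ * V)) {x : n → 𝕜}
    (hx : (Q + V * Rᵀ) *ᵥ x = 0) : Rᵀ *ᵥ x = 0 := by
  have hWQ : Wᵀ * Q = 0 := by
    rw [← transpose_transpose (Wᵀ * Q), transpose_mul, transpose_transpose, hWker,
      transpose_zero]
  apply mulVec_injective_of_isUnit hWV
  calc (Wᵀ * V) *ᵥ (Rᵀ *ᵥ x) = Wᵀ *ᵥ ((Q + V * Rᵀ) *ᵥ x) := by
        rw [mulVec_mulVec, mulVec_mulVec, Matrix.mul_add, hWQ, zero_add, Matrix.mul_assoc]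
    _ = (Wᵀ * V) *ᵥ 0 := by rw [hx, mulVec_zero, mulVec_zero]

theorem mulVec_eq_zero_of_transpose_mulVec_mulVec_eq_zero {R N : Matrix n k 𝕜}
    (hR : IsUnit (Rᵀ * N)) {α : k → 𝕜} (h : Rᵀ *ᵥ (N *ᵥ α) = 0) : N *ᵥ α = 0 := by
  have hα : α = 0 := mulVec_injective_of_isUnit hR <| by
    rw [← mulVec_mulVec, h, mulVec_zero]
  rw [hα, mulVec_zero]

end Matrix

theorem stmt2_general (m n k : ℕ)
    (Q : Matrix (Fin m) (Fin n) ℝ) (N : Matrix (Fin n) (Fin k) ℝ)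
    (R : Matrix (Fin n) (Fin k) ℝ) (W V : Matrix (Fin m) (Fin k) ℝ)
    (hNspan : ∀ x : Fin n → ℝ, Q.mulVec x = 0 ↔ ∃ α : Fin k → ℝ, x = N.mulVec α)
    (hR : IsUnit (Rᵀ * N))
    (hWker : Qᵀ * W = 0)
    (hWV : IsUnit (Wᵀ * V)) :
    ∀ x : Fin n → ℝ, (Q + V * Rᵀ).mulVec x = 0 → x = 0 := by
  intro x hx
  have hRx : Rᵀ *ᵥ x = 0 :=
    transpose_mulVec_eq_zero_of_add_mul_transpose_mulVec_eq_zero hWker hWV hx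
  have hQx : Q *ᵥ x = 0 := by
    rwa [add_mulVec, ← mulVec_mulVec, hRx, mulVec_zero, add_zero] at hx
  obtain ⟨α, rfl⟩ := (hNspan x).1 hQx
  exact mulVec_eq_zero_of_transpose_mulVec_mulVec_eq_zero hR hRx

/-- **Trivial nullspace after rank-k perturbation.**
Let `Q` be an `m×n` real matrix with `m ≥ n`, whose nullspace is `k`-dimensional
with basis the columns of the `n×k` matrix `N`. Let `R` be `n×k` with `Rᵀ N`
invertible. Let `W` be an `m×k` matrix whose columns are linearly independent and
lie in `Nul Qᵀ` (i.e. span a `k`-dimensional subspace of `Nul Qᵀ`), and let `V` be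
an `m×k` matrix with `Wᵀ V` invertible. Then `Q + V Rᵀ` has trivial nullspace. -/
theorem stmt2 (m n k : ℕ) (hmn : n ≤ m)
    (Q : Matrix (Fin m) (Fin n) ℝ) (N : Matrix (Fin n) (Fin k) ℝ)
    (R : Matrix (Fin n) (Fin k) ℝ) (W V : Matrix (Fin m) (Fin k) ℝ)
    (hNindep : LinearIndependent ℝ (fun j : Fin k => fun i : Fin n => N i j))
    (hNspan : ∀ x : Fin n → ℝ, Q.mulVec x = 0 ↔ ∃ α : Fin k → ℝ, x = N.mulVec α)
    (hR : IsUnit (Rᵀ * N))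
    (hWindep : LinearIndependent ℝ (fun j : Fin k => fun i : Fin m => W i j))
    (hWker : Qᵀ * W = 0)
    (hWV : IsUnit (Wᵀ * V)) :
    ∀ x : Fin n → ℝ, (Q + V * Rᵀ).mulVec x = 0 → x = 0 :=
  stmt2_general m n k Q N R W V hNspan hR hWker hWV
end

section
/- Let v be harmonic in the closed unit square B with zero discrepancy: v_R − v_L = 0, v_{nR} − v_{nL} = 0, v_U − v_D = 0, v_{nU} − v_{nD} = 0. Then v is constant on B. -/
open Set

/-- directional partial derivative of a scalar field on the plane `ℂ ≅ ℝ²`;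
`pd 1 f = ∂₁ f` and `pd Complex.I f = ∂₂ f`. -/
noncomputable def pd (w : ℂ) (f : ℂ → ℝ) (x : ℂ) : ℝ := fderiv ℝ f x w

/-- Laplacian in the plane. -/
noncomputable def lap (f : ℂ → ℝ) (x : ℂ) : ℝ :=
  pd 1 (pd 1 f) x + pd Complex.I (pd Complex.I f) x

/-- the open unit square `B = (−1/2,1/2)²`. -/
def usq : Set ℂ :=
  {z | z.re ∈ Ioo (-(1/2) : ℝ) (1/2) ∧ z.im ∈ Ioo (-(1/2) : ℝ) (1/2)}

/-- its closure, the closed unit square `B̄`. -/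
def csq : Set ℂ :=
  {z | z.re ∈ Icc (-(1/2) : ℝ) (1/2) ∧ z.im ∈ Icc (-(1/2) : ℝ) (1/2)}

/-!
Green's first identity on the square, `∫_B (v Δv + |∇v|²) = ∮_{∂B} v ∂ₙv`, has a vanishing
boundary term because the flux `v ∂ₙv` takes the same values on opposite walls. As `Δv = 0`,
the Dirichlet energy `∫_B |∇v|²` vanishes, so the continuous integrand `|∇v|²` vanishes on `B̄`
and `v` is constant on the connected open square, hence on its closure.
-/

open MeasureTheory Complex

lemma usq_eq_reProdIm : usq = Ioo (-(1/2) : ℝ) (1/2) ×ℂ Ioo (-(1/2) : ℝ) (1/2) := rfl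

lemma csq_eq_reProdIm : csq = Icc (-(1/2) : ℝ) (1/2) ×ℂ Icc (-(1/2) : ℝ) (1/2) := rfl

lemma isOpen_usq : IsOpen usq := isOpen_Ioo.reProdIm isOpen_Ioo

lemma isPreconnected_usq : IsPreconnected usq := by
  have : usq = equivRealProdLm ⁻¹' (Ioo (-(1/2) : ℝ) (1/2) ×ˢ Ioo (-(1/2) : ℝ) (1/2)) := rfl
  rw [this]
  exact ((convex_Ioo _ _).prod (convex_Ioo _ _)).linear_preimage _ |>.isPreconnected

lemma usq_subset_csq : usq ⊆ csq := fun _ hz => ⟨Ioo_subset_Icc_self hz.1, Ioo_subset_Icc_self hz.2⟩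

lemma closure_usq : closure usq = csq := by
  rw [usq_eq_reProdIm, closure_reProdIm, closure_Ioo (by norm_num), csq_eq_reProdIm]

lemma equivRealProdCLM_symm_mem_csq {p : ℝ × ℝ} :
    equivRealProdCLM.symm p ∈ csq ↔ p ∈ Icc (-(1/2), -(1/2)) (1/2, 1/2) := by
  simp [csq, Prod.le_def, and_and_and_comm]

lemma Icc_subset_closure_interior_Icc {a b : ℝ × ℝ} (hab : a.1 < b.1 ∧ a.2 < b.2) :
    Icc a b ⊆ closure (interior (Icc a b)) := by
  rw [Icc_prod_eq, interior_prod_eq, closure_prod_eq, interior_Icc, interior_Icc,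
    closure_Ioo hab.1.ne, closure_Ioo hab.2.ne]

theorem ContinuousOn.eqOn_zero_of_setIntegral_eq_zero {X : Type*} [TopologicalSpace X]
    [T2Space X] [MeasurableSpace X] [OpensMeasurableSpace X] {μ : Measure X}
    [μ.IsOpenPosMeasure] [IsFiniteMeasureOnCompacts μ] {F : X → ℝ} {s : Set X}
    (hs : IsCompact s) (hsi : s ⊆ closure (interior s)) (hF : ContinuousOn F s)
    (hF0 : ∀ x ∈ s, 0 ≤ F x) (h : ∫ x in s, F x ∂μ = 0) : EqOn F 0 s := by
  have hnonneg : 0 ≤ᵐ[μ.restrict s] F :=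
    (ae_restrict_iff' hs.measurableSet).2 (Filter.Eventually.of_forall hF0)
  have hae := (setIntegral_eq_zero_iff_of_nonneg_ae hnonneg (hF.integrableOn_compact hs)).1 h
  exact Measure.eqOn_of_ae_eq hae hF continuousOn_const hsi

lemma fderiv_eq_zero_of_pd_eq_zero {f : ℂ → ℝ} {z : ℂ} (h1 : pd 1 f z = 0)
    (hI : pd I f z = 0) : fderiv ℝ f z = 0 :=
  ContinuousLinearMap.coe_injective <| basisOneI.ext <|
    Fin.forall_fin_two.2 ⟨by simpa [pd] using h1, by simpa [pd] using hI⟩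

theorem ContDiffOn.contDiffOn_pd {f : ℂ → ℝ} {U : Set ℂ} {m n : WithTop ℕ∞}
    (hf : ContDiffOn ℝ n f U) (hU : IsOpen U) (hmn : m + 1 ≤ n) (d : ℂ) :
    ContDiffOn ℝ m (pd d f) U :=
  (hf.fderiv_of_isOpen hU hmn).clm_apply contDiffOn_const

theorem ContDiffOn.continuousOn_lap {f : ℂ → ℝ} {U : Set ℂ} (hf : ContDiffOn ℝ 2 f U)
    (hU : IsOpen U) : ContinuousOn (lap f) U :=
  have hpd (d : ℂ) : ContDiffOn ℝ 1 (pd d f) U := hf.contDiffOn_pd hU (by norm_num) d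
  (((hpd 1).contDiffOn_pd hU (m := 0) le_rfl 1).add
    ((hpd I).contDiffOn_pd hU (m := 0) le_rfl I)).continuousOn

lemma pd_mul_pd_self {f : ℂ → ℝ} {z : ℂ} (d : ℂ) (hf : DifferentiableAt ℝ f z)
    (hfd : DifferentiableAt ℝ (pd d f) z) :
    pd d (f * pd d f) z = f z * pd d (pd d f) z + pd d f z ^ 2 := by
  rw [pd, fderiv_mul hf hfd]
  simp [pd, sq]

theorem integral_mul_lap_add_sq_pd_Icc {w : ℂ → ℝ} {U : Set ℂ} (hU : IsOpen U)
    (hw : ContDiffOn ℝ 2 w U) {a b : ℝ × ℝ} (hab : a ≤ b)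
    (hsub : MapsTo equivRealProdCLM.symm (Icc a b) U) :
    ∫ p in Icc a b, (w * lap w + pd 1 w ^ 2 + pd I w ^ 2) (equivRealProdCLM.symm p) =
      (((∫ x in a.1..b.1, (w * pd I w) (equivRealProdCLM.symm (x, b.2))) -
          ∫ x in a.1..b.1, (w * pd I w) (equivRealProdCLM.symm (x, a.2))) +
        ∫ y in a.2..b.2, (w * pd 1 w) (equivRealProdCLM.symm (b.1, y))) -
      ∫ y in a.2..b.2, (w * pd 1 w) (equivRealProdCLM.symm (a.1, y)) := by
  set E : (ℝ × ℝ) ≃L[ℝ] ℂ := equivRealProdCLM.symm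
  have hw1 : DifferentiableOn ℝ w U := hw.differentiableOn (by norm_num)
  have hpd (d : ℂ) : ContDiffOn ℝ 1 (pd d w) U := hw.contDiffOn_pd hU (by norm_num) d
  have hpd1 (d : ℂ) : DifferentiableOn ℝ (pd d w) U := (hpd d).differentiableOn one_ne_zero
  have hflux (d : ℂ) : ContinuousOn (w * pd d w) U := hw.continuousOn.mul (hpd d).continuousOn
  have hfluxd (d : ℂ) {z : ℂ} (hz : z ∈ U) :
      HasFDerivAt (w * pd d w) (fderiv ℝ (w * pd d w) z) z :=
    ((hw1.mul (hpd1 d)).differentiableAt (hU.mem_nhds hz)).hasFDerivAt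
  have hinner : ∀ p ∈ Ioo a.1 b.1 ×ˢ Ioo a.2 b.2 \ ∅, E p ∈ U := fun p hp =>
    hsub ⟨⟨hp.1.1.1.le, hp.1.2.1.le⟩, ⟨hp.1.1.2.le, hp.1.2.2.le⟩⟩
  have hdiv : EqOn (fun p => pd 1 (w * pd 1 w) (E p) + pd I (w * pd I w) (E p))
      (fun p => (w * lap w + pd 1 w ^ 2 + pd I w ^ 2) (E p)) (Icc a b) := by
    intro p hp
    have hz := hU.mem_nhds (hsub hp)
    simp only [pd_mul_pd_self _ (hw1.differentiableAt hz) ((hpd1 _).differentiableAt hz),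
      Pi.add_apply, Pi.mul_apply, Pi.pow_apply, lap]
    ring
  have hcont : ContinuousOn (w * lap w + pd 1 w ^ 2 + pd I w ^ 2) U :=
    ((hw.continuousOn.mul (hw.continuousOn_lap hU)).add ((hpd 1).continuousOn.pow 2)).add
      ((hpd I).continuousOn.pow 2)
  rw [← setIntegral_congr_fun measurableSet_Icc hdiv]
  -- `E (1, 0) = 1` and `E (0, 1) = I` hold definitionally, so the divergence below is the
  -- left-hand side of `hdiv`.
  exact integral_divergence_prod_Icc_of_hasFDerivAt_off_countable_of_le
    ((w * pd 1 w) ∘ E) ((w * pd I w) ∘ E)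
    (fun p => (fderiv ℝ (w * pd 1 w) (E p)).comp (E : (ℝ × ℝ) →L[ℝ] ℂ))
    (fun p => (fderiv ℝ (w * pd I w) (E p)).comp (E : (ℝ × ℝ) →L[ℝ] ℂ)) a b hab ∅ countable_empty
    ((hflux 1).comp E.continuousOn hsub) ((hflux I).comp E.continuousOn hsub)
    (fun p hp => (hfluxd 1 (hinner p hp)).comp p E.hasFDerivAt)
    (fun p hp => (hfluxd I (hinner p hp)).comp p E.hasFDerivAt)
    (((hcont.comp E.continuousOn hsub).integrableOn_compact isCompact_Icc).congr_fun
      hdiv.symm measurableSet_Icc)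

theorem integral_sq_pd_eq_zero_of_periodic_flux {w : ℂ → ℝ} {U : Set ℂ} (hU : IsOpen U)
    (hw : ContDiffOn ℝ 2 w U) {a b : ℝ × ℝ} (hab : a ≤ b)
    (hsub : MapsTo equivRealProdCLM.symm (Icc a b) U)
    (hharm : ∀ p ∈ Icc a b, lap w (equivRealProdCLM.symm p) = 0)
    (hLR : ∀ y ∈ Icc a.2 b.2, (w * pd 1 w) (equivRealProdCLM.symm (b.1, y)) =
      (w * pd 1 w) (equivRealProdCLM.symm (a.1, y)))
    (hDU : ∀ x ∈ Icc a.1 b.1, (w * pd I w) (equivRealProdCLM.symm (x, b.2)) =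
      (w * pd I w) (equivRealProdCLM.symm (x, a.2))) :
    ∫ p in Icc a b, (pd 1 w ^ 2 + pd I w ^ 2) (equivRealProdCLM.symm p) = 0 := by
  have hDU' := intervalIntegral.integral_congr (μ := volume) fun x hx =>
    hDU x (uIcc_of_le hab.1 ▸ hx)
  have hLR' := intervalIntegral.integral_congr (μ := volume) fun y hy =>
    hLR y (uIcc_of_le hab.2 ▸ hy)
  have hgreen := integral_mul_lap_add_sq_pd_Icc hU hw hab hsub
  rw [hDU', hLR', sub_self, zero_add, sub_self] at hgreen
  rw [← hgreen]
  refine setIntegral_congr_fun measurableSet_Icc fun p hp => ?_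
  simp only [Pi.add_apply, Pi.mul_apply, hharm p hp, mul_zero, zero_add]

theorem fderiv_eq_zero_of_integral_sq_pd_eq_zero {w : ℂ → ℝ} {U : Set ℂ} (hU : IsOpen U)
    (hw : ContDiffOn ℝ 1 w U) {a b : ℝ × ℝ} (hab : a.1 < b.1 ∧ a.2 < b.2)
    (hsub : MapsTo equivRealProdCLM.symm (Icc a b) U)
    (h : ∫ p in Icc a b, (pd 1 w ^ 2 + pd I w ^ 2) (equivRealProdCLM.symm p) = 0)
    {p : ℝ × ℝ} (hp : p ∈ Icc a b) : fderiv ℝ w (equivRealProdCLM.symm p) = 0 := by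
  have hpd (d : ℂ) : ContinuousOn (pd d w) U :=
    (hw.contDiffOn_pd hU (m := 0) le_rfl d).continuousOn
  have hcont : ContinuousOn (pd 1 w ^ 2 + pd I w ^ 2) U := ((hpd 1).pow 2).add ((hpd I).pow 2)
  have hsq : pd 1 w (equivRealProdCLM.symm p) ^ 2 + pd I w (equivRealProdCLM.symm p) ^ 2 = 0 :=
    (hcont.comp equivRealProdCLM.symm.continuousOn hsub).eqOn_zero_of_setIntegral_eq_zero
      isCompact_Icc (Icc_subset_closure_interior_Icc hab)
      (fun _ _ => add_nonneg (sq_nonneg _) (sq_nonneg _)) h hp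
  obtain ⟨h1, hI⟩ := (add_eq_zero_iff_of_nonneg (sq_nonneg _) (sq_nonneg _)).1 hsq
  exact fderiv_eq_zero_of_pd_eq_zero (pow_eq_zero_iff two_ne_zero |>.1 h1)
    (pow_eq_zero_iff two_ne_zero |>.1 hI)

/-- **Uniqueness (up to constants) for the empty-cell Laplace discrepancy BVP.**
Let `v` be harmonic in the unit square `B = (−1/2,1/2)²`, `C²` up to its closure
(formalized as `C²` on an open neighborhood of `B̄`), with zero discrepancy:
`v_R − v_L = 0`, `v_{nR} − v_{nL} = 0`, `v_U − v_D = 0`, `v_{nU} − v_{nD} = 0`.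
Then `v` is constant on `B̄`. -/
theorem stmt6 (v : ℂ → ℝ) (U : Set ℂ) (hU : IsOpen U) (hsub : csq ⊆ U)
    (hv : ContDiffOn ℝ 2 v U)
    (hharm : ∀ z ∈ usq, lap v z = 0)
    (hg1 : ∀ y ∈ Icc (-(1/2) : ℝ) (1/2),
      v ((1/2 : ℂ) + (y : ℂ) * Complex.I) = v ((-(1/2) : ℂ) + (y : ℂ) * Complex.I))
    (hg2 : ∀ y ∈ Icc (-(1/2) : ℝ) (1/2),
      pd 1 v ((1/2 : ℂ) + (y : ℂ) * Complex.I)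
        = pd 1 v ((-(1/2) : ℂ) + (y : ℂ) * Complex.I))
    (hg3 : ∀ x ∈ Icc (-(1/2) : ℝ) (1/2),
      v ((x : ℂ) + (1/2 : ℂ) * Complex.I) = v ((x : ℂ) + (-(1/2) : ℂ) * Complex.I))
    (hg4 : ∀ x ∈ Icc (-(1/2) : ℝ) (1/2),
      pd Complex.I v ((x : ℂ) + (1/2 : ℂ) * Complex.I)
        = pd Complex.I v ((x : ℂ) + (-(1/2) : ℂ) * Complex.I)) :
    ∃ c : ℝ, ∀ z ∈ csq, v z = c := by
  have hmaps : MapsTo equivRealProdCLM.symm (Icc (-(1/2), -(1/2)) (1/2, 1/2)) U :=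
    fun p hp => hsub (equivRealProdCLM_symm_mem_csq.2 hp)
  have hlap : EqOn (lap v) 0 csq :=
    EqOn.of_subset_closure hharm ((hv.continuousOn_lap hU).mono hsub) continuousOn_const
      usq_subset_csq closure_usq.symm.subset
  have henergy := integral_sq_pd_eq_zero_of_periodic_flux hU hv (by norm_num [Prod.le_def]) hmaps
    (fun p hp => hlap (equivRealProdCLM_symm_mem_csq.2 hp))
    (fun y hy => by
      simp only [Pi.mul_apply, equivRealProdCLM_symm_apply]; push_cast; rw [hg1 y hy, hg2 y hy])
    (fun x hx => by
      simp only [Pi.mul_apply, equivRealProdCLM_symm_apply]; push_cast; rw [hg3 x hx, hg4 x hx])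
  have hgrad : EqOn (fderiv ℝ v) 0 usq := fun z hz => by
    have hmem := equivRealProdCLM_symm_mem_csq.1 <|
      (equivRealProdCLM.symm_apply_apply z).symm ▸ usq_subset_csq hz
    simpa only [ContinuousLinearEquiv.symm_apply_apply, Pi.zero_apply] using
      fderiv_eq_zero_of_integral_sq_pd_eq_zero hU (hv.of_le (by norm_num)) (by norm_num) hmaps
        henergy hmem
  obtain ⟨c, hc⟩ := isOpen_usq.exists_is_const_of_fderiv_eq_zero isPreconnected_usq
    ((hv.differentiableOn (by norm_num)).mono (usq_subset_csq.trans hsub)) hgrad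
  exact ⟨c, EqOn.of_subset_closure hc (hv.continuousOn.mono hsub) continuousOn_const
    usq_subset_csq closure_usq.symm.subset⟩
end
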